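/- arXiv:1612.06835 — 2 statements merged into one kernel-verified Lean document; each statement's English description precedes it below -/
import Mathlib

section
/- For every real y ≥ 0, one has erf(y) ≥ y/√(y² + 4/π). -/
open Real

/-- erf(x) = (2/√π)·∫_0^x e^{−t²} dt -/
noncomputable def erf (x : ℝ) : ℝ := (2 / Real.sqrt Real.pi) * ∫ t in (0:ℝ)..x, Real.exp (-t ^ 2)

/-!
For `y ≤ 1/2` the bound `exp (-t²) ≥ 1 - t²` gives `erf y ≥ (2/√π)(y - y³/3)`, which already
exceeds `y/√(4/π)`. For `y ≥ 1/2` write `erf y = 1 - (2/√π) ∫_y^∞ exp (-t²)`. Comparing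
derivatives bounds the tail by `exp (-y²)/(y + s)` with `s = √(y² + 4/π)`, and
`exp (-y²) ≤ √(4/π)/s` follows from `exp (2y²) ≥ 1 + 2y²`. Since `s² - y² = 4/π`, the tail
term is then at most `(s - y)/s`, i.e. `erf y ≥ y/s`.
-/

open Set MeasureTheory Filter

lemma integrable_exp_neg_sq : Integrable fun t : ℝ => exp (-t ^ 2) := by
  simpa using integrable_exp_neg_mul_sq one_pos

lemma add_sqrt_sq_add_pos {c : ℝ} (hc : 0 < c) (t : ℝ) : 0 < t + √(t ^ 2 + c) := by
  have : |t| < √(t ^ 2 + c) := by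
    rw [← sqrt_sq_eq_abs]
    exact sqrt_lt_sqrt (sq_nonneg t) (by linarith)
  linarith [neg_abs_le t]

lemma hasDerivAt_exp_neg_sq_div_add_sqrt {c : ℝ} (hc : 0 < c) (t : ℝ) :
    HasDerivAt (fun t => exp (-t ^ 2) / (t + √(t ^ 2 + c)))
      (-(exp (-t ^ 2) * (2 * t * √(t ^ 2 + c) + 1) / (√(t ^ 2 + c) * (t + √(t ^ 2 + c))))) t := by
  have hq : 0 < t ^ 2 + c := by positivity
  have hts := add_sqrt_sq_add_pos hc t
  have hexp : HasDerivAt (fun t => exp (-t ^ 2)) (exp (-t ^ 2) * (-(2 * t))) t := by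
    simpa using ((hasDerivAt_pow 2 t).neg).exp
  have hsqrt : HasDerivAt (fun t => √(t ^ 2 + c)) ((2 * t) / (2 * √(t ^ 2 + c))) t := by
    simpa using ((hasDerivAt_pow 2 t).add_const c).sqrt hq.ne'
  refine (hexp.div ((hasDerivAt_id' t).fun_add hsqrt) hts.ne').congr_deriv ?_
  field_simp
  ring

/-- The hypothesis says that `-ψ' ≥ exp (-t ^ 2)` on `[y, ∞)` for the nonnegative function
`ψ t = exp (-t ^ 2) / (t + √(t ^ 2 + c))`. -/
lemma integral_Ioi_exp_neg_sq_le {c y : ℝ} (hc : 0 < c)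
    (h : ∀ t ≥ y, t ^ 2 + c ≤ t * √(t ^ 2 + c) + 1) :
    ∫ t in Ioi y, exp (-t ^ 2) ≤ exp (-y ^ 2) / (y + √(y ^ 2 + c)) := by
  set ψ := fun t => exp (-t ^ 2) / (t + √(t ^ 2 + c))
  have hψ := hasDerivAt_exp_neg_sq_div_add_sqrt hc
  have hderiv_le : ∀ t ≥ y, exp (-t ^ 2) ≤
      exp (-t ^ 2) * (2 * t * √(t ^ 2 + c) + 1) / (√(t ^ 2 + c) * (t + √(t ^ 2 + c))) := by
    intro t ht
    have hts := add_sqrt_sq_add_pos hc t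
    have hden : √(t ^ 2 + c) * (t + √(t ^ 2 + c)) ≤ 2 * t * √(t ^ 2 + c) + 1 := by
      nlinarith [h t ht, sq_sqrt (by positivity : 0 ≤ t ^ 2 + c)]
    rw [le_div_iff₀ (by positivity)]
    exact mul_le_mul_of_nonneg_left hden (exp_pos _).le
  have hbound : ∀ z ≥ y, ∫ t in y..z, exp (-t ^ 2) ≤ ψ y := by
    intro z hz
    have := intervalIntegral.integral_le_sub_of_hasDeriv_right_of_le hz
      (fun t _ => (hψ t).neg.continuousAt.continuousWithinAt)
      (fun t _ => (hψ t).neg.hasDerivWithinAt) integrable_exp_neg_sq.integrableOn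
      (fun t ht => by simpa using hderiv_le t ht.1.le)
    have hψz : 0 ≤ ψ z := div_nonneg (exp_pos _).le (add_sqrt_sq_add_pos hc z).le
    simp only [ψ, Pi.neg_apply] at this hψz ⊢
    linarith
  exact le_of_tendsto
    (intervalIntegral_tendsto_integral_Ioi y integrable_exp_neg_sq.integrableOn tendsto_id)
    (eventually_ge_atTop y |>.mono hbound)

lemma erf_eq_one_sub_integral_Ioi (y : ℝ) :
    erf y = 1 - 2 / √π * ∫ t in Ioi y, exp (-t ^ 2) := by
  have hgauss : ∫ t in Ioi (0 : ℝ), exp (-t ^ 2) = √π / 2 := by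
    simpa using integral_gaussian_Ioi 1
  rw [erf, ← intervalIntegral.integral_Ioi_sub_Ioi' integrable_exp_neg_sq.integrableOn
    integrable_exp_neg_sq.integrableOn, hgauss, mul_sub]
  field_simp

lemma exp_neg_sq_mul_sqrt_sq_add_le {c : ℝ} (hc : 1 / 2 ≤ c) (y : ℝ) :
    exp (-y ^ 2) * √(y ^ 2 + c) ≤ √c := by
  have hexp : exp (-y ^ 2) ^ 2 * exp (2 * y ^ 2) = 1 := by
    rw [sq, ← exp_add, ← exp_add]; ring_nf; exact exp_zero
  have h := add_one_le_exp (2 * y ^ 2)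
  rw [← sqrt_sq (exp_pos _).le, ← sqrt_mul (sq_nonneg _)]
  refine sqrt_le_sqrt ?_
  nlinarith [sq_nonneg (exp (-y ^ 2)), sq_nonneg y]

lemma sub_cube_div_three_le_integral_exp_neg_sq {y : ℝ} (hy : 0 ≤ y) :
    y - y ^ 3 / 3 ≤ ∫ t in (0 : ℝ)..y, exp (-t ^ 2) := by
  have hpoly : ∫ t in (0 : ℝ)..y, (1 - t ^ 2) = y - y ^ 3 / 3 := by
    norm_num [integral_pow]
  rw [← hpoly]
  refine intervalIntegral.integral_mono_on hy
    ((by fun_prop : Continuous fun t : ℝ => 1 - t ^ 2).intervalIntegrable _ _)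
    ((by fun_prop : Continuous fun t : ℝ => exp (-t ^ 2)).intervalIntegrable _ _) fun t _ => ?_
  linarith [add_one_le_exp (-t ^ 2)]

lemma sqrt_four_div_pi : √(4 / π) = 2 / √π := by
  rw [sqrt_div' _ pi_pos.le, show (4 : ℝ) = 2 ^ 2 by norm_num, sqrt_sq zero_le_two]

lemma sq_add_four_div_pi_le {t : ℝ} (ht : 1 / 2 ≤ t) :
    t ^ 2 + 4 / π ≤ t * √(t ^ 2 + 4 / π) + 1 := by
  have hc1 : 1 < 4 / π := by rw [one_lt_div pi_pos]; exact pi_lt_four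
  have hc2 : 4 / π < 1.28 := by rw [div_lt_iff₀ pi_pos]; linarith [pi_gt_d2]
  set c := 4 / π
  have hq : 0 ≤ t ^ 2 + c := by positivity
  have hsq : (t ^ 2 + c - 1) ^ 2 ≤ (t * √(t ^ 2 + c)) ^ 2 := by
    rw [mul_pow, sq_sqrt hq]
    nlinarith
  have := (pow_le_pow_iff_left₀ (by nlinarith) (by positivity) two_ne_zero).1 hsq
  linarith

lemma div_sqrt_le_erf_of_le_half {y : ℝ} (hy₀ : 0 ≤ y) (hy : y ≤ 1 / 2) :
    y / √(y ^ 2 + 4 / π) ≤ erf y := by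
  calc y / √(y ^ 2 + 4 / π) ≤ y / √(4 / π) :=
        div_le_div_of_nonneg_left hy₀ (by positivity) (sqrt_le_sqrt (by nlinarith))
    _ = 2 / √π * (π / 4 * y) := by
        rw [sqrt_four_div_pi]
        field_simp
        rw [sq_sqrt pi_pos.le]
        ring
    _ ≤ 2 / √π * (y - y ^ 3 / 3) := by
        gcongr
        have : 0 ≤ 1 - y ^ 2 / 3 - π / 4 := by nlinarith [pi_lt_d2]
        nlinarith [mul_nonneg hy₀ this]
    _ ≤ erf y := by
        rw [erf]
        gcongr
        exact sub_cube_div_three_le_integral_exp_neg_sq hy₀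

lemma div_sqrt_le_erf_of_half_le {y : ℝ} (hy : 1 / 2 ≤ y) :
    y / √(y ^ 2 + 4 / π) ≤ erf y := by
  have hc : 0 < 4 / π := by positivity
  have hc_half : 1 / 2 ≤ 4 / π := by rw [le_div_iff₀ pi_pos]; linarith [pi_lt_four]
  set c := 4 / π
  set s := √(y ^ 2 + c)
  have hs : 0 < s := sqrt_pos.2 (by positivity)
  have hys : 0 < y + s := add_sqrt_sq_add_pos hc y
  have htail := integral_Ioi_exp_neg_sq_le hc fun t ht => sq_add_four_div_pi_le (hy.trans ht)
  have hexp : √c * (exp (-y ^ 2) * s) ≤ c := by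
    have := mul_le_mul_of_nonneg_left
      (exp_neg_sq_mul_sqrt_sq_add_le hc_half y) (sqrt_nonneg c)
    rwa [mul_self_sqrt hc.le] at this
  have hgap : 1 - y / s = c / (s * (y + s)) := by
    field_simp
    linear_combination sq_sqrt (by positivity : 0 ≤ y ^ 2 + c)
  rw [erf_eq_one_sub_integral_Ioi, ← sqrt_four_div_pi]
  calc y / s = 1 - c / (s * (y + s)) := by rw [← hgap]; ring
    _ ≤ 1 - √c * (exp (-y ^ 2) / (y + s)) := by
        rw [mul_div_assoc', sub_le_sub_iff_left, div_le_div_iff₀ hys (by positivity)]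
        nlinarith [mul_le_mul_of_nonneg_right hexp hys.le]
    _ ≤ 1 - √c * ∫ t in Ioi y, exp (-t ^ 2) := by gcongr

theorem stmt3 (y : ℝ) (hy : 0 ≤ y) :
    erf y ≥ y / Real.sqrt (y ^ 2 + 4 / Real.pi) := by
  rcases le_total y (1 / 2) with hsmall | hlarge
  · exact div_sqrt_le_erf_of_le_half hy hsmall
  · exact div_sqrt_le_erf_of_half_le hlarge
end

section
/- Let μ ∈ [1/2, 1], 0 < β < 1, and suppose α, β satisfy 0 < (1+β−2α)/((2μ−1)(1−β)) < 1. If y > 0 satisfies both √π·y·e^{y²}·erfc(−y) = (μ(1−β)+β)/α − 1 and √π·y·e^{y²}·erfc(y) = 1 + (−β−(1−μ)(1−β))/α, then erf(y) = (1+β−2α)/((2μ−1)(1−β)), and consequently (2μ−1)(1−β)·e^{−y²}/(2√π·α·y) = 1. -/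
open Real MeasureTheory

/-- erfc(x) = (2/√π)·∫_x^∞ e^{−t²} dt -/
noncomputable def erfc (x : ℝ) : ℝ := (2 / Real.sqrt Real.pi) * ∫ t in Set.Ioi x, Real.exp (-t ^ 2)

lemma gauss_int : Integrable (fun t : ℝ => Real.exp (-t ^ 2)) := by
  have := integrable_exp_neg_mul_sq (b := 1) one_pos
  simpa using this

lemma erfc_split (a b : ℝ) (hab : a ≤ b) :
    erfc a = ((2 / Real.sqrt Real.pi) * ∫ t in a..b, Real.exp (-t ^ 2)) + erfc b := by
  unfold erfc
  rw [intervalIntegral.integral_of_le hab]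
  have : (Set.Ioi a) = Set.Ioc a b ∪ Set.Ioi b := (Set.Ioc_union_Ioi_eq_Ioi hab).symm
  rw [this, setIntegral_union (Set.Ioc_disjoint_Ioi le_rfl) measurableSet_Ioi
    gauss_int.integrableOn gauss_int.integrableOn, mul_add]

lemma erf_add_erfc (y : ℝ) (hy : 0 ≤ y) : erf y + erfc y = 1 := by
  have h := erfc_split 0 y hy
  have h0 : erfc 0 = 1 := by
    unfold erfc
    have : ∫ t in Set.Ioi (0:ℝ), Real.exp (-t ^ 2) = Real.sqrt Real.pi / 2 := by
      have := integral_gaussian_Ioi 1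
      simpa using this
    rw [this]
    rw [div_mul_div_comm]
    rw [div_eq_one_iff_eq (by positivity)]
    ring
  rw [h0] at h
  unfold erf
  linarith

lemma erf_neg_int (y : ℝ) : (∫ t in (-y)..(0:ℝ), Real.exp (-t ^ 2)) = ∫ t in (0:ℝ)..y, Real.exp (-t ^ 2) := by
  have := intervalIntegral.integral_comp_neg (a := 0) (b := y) (fun t => Real.exp (-t ^ 2))
  simp only [neg_zero] at this
  rw [← this]
  congr 1
  ext t
  ring_nf

lemma erfc_neg (y : ℝ) (hy : 0 ≤ y) : erfc (-y) = 2 * erf y + erfc y := by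
  have h := erfc_split (-y) y (by linarith)
  rw [h]
  have : (∫ t in (-y)..y, Real.exp (-t ^ 2))
      = (∫ t in (-y)..(0:ℝ), Real.exp (-t ^ 2)) + ∫ t in (0:ℝ)..y, Real.exp (-t ^ 2) := by
    rw [intervalIntegral.integral_add_adjacent_intervals] <;>
      exact gauss_int.intervalIntegrable
  rw [this, erf_neg_int]
  unfold erf
  ring

theorem stmt18 (μ α β y : ℝ) (hμ : μ ∈ Set.Icc (1/2 : ℝ) 1) (hβ0 : 0 < β) (hβ1 : β < 1)
    (hv0 : 0 < (1 + β - 2 * α) / ((2 * μ - 1) * (1 - β)))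
    (hv1 : (1 + β - 2 * α) / ((2 * μ - 1) * (1 - β)) < 1)
    (hy : 0 < y)
    (h1 : Real.sqrt Real.pi * y * Real.exp (y ^ 2) * erfc (-y) = (μ * (1 - β) + β) / α - 1)
    (h2 : Real.sqrt Real.pi * y * Real.exp (y ^ 2) * erfc y
      = 1 + (-β - (1 - μ) * (1 - β)) / α) :
    erf y = (1 + β - 2 * α) / ((2 * μ - 1) * (1 - β)) ∧
    (2 * μ - 1) * (1 - β) * Real.exp (-y ^ 2) / (2 * Real.sqrt Real.pi * α * y) = 1 := by
  have hsq : 0 < Real.sqrt Real.pi := Real.sqrt_pos.mpr Real.pi_pos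
  set K := Real.sqrt Real.pi * y * Real.exp (y ^ 2) with hKdef
  have hK : 0 < K := by positivity
  have hneg := erfc_neg y hy.le
  have hsum := erf_add_erfc y hy.le
  rw [hneg] at h1
  have hKs : K * (erf y + erfc y) = K := by rw [hsum, mul_one]
  have hα : α ≠ 0 := by
    rintro rfl
    simp only [div_zero, zero_add, add_zero, sub_zero, zero_sub] at h1 h2
    nlinarith [hKs, h1, h2, hK]
  have h3 : (2:ℝ) * K = (μ * (1 - β) + β) / α - 1 + (1 + (-β - (1 - μ) * (1 - β)) / α) := by
    rw [← h1, ← h2]; linear_combination (-2) * hKs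
  have h4 : 2 * K * erf y
      = (μ * (1 - β) + β) / α - 1 - (1 + (-β - (1 - μ) * (1 - β)) / α) := by
    rw [← h1, ← h2]; ring
  field_simp at h3 h4
  have hD : 2 * K * α = (2 * μ - 1) * (1 - β) := by linear_combination h3
  have hE : 2 * K * α * erf y = 1 + β - 2 * α := by linear_combination h4
  have hDne : 2 * K * α ≠ 0 := by
    intro h; exact hα (by nlinarith [hK])
  constructor
  · rw [← hD, eq_div_iff hDne]; linear_combination hE
  · rw [← hD]
    have hden : 2 * Real.sqrt Real.pi * α * y ≠ 0 := by
      apply mul_ne_zero (mul_ne_zero (mul_ne_zero two_ne_zero hsq.ne') hα) hy.ne'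
    rw [div_eq_one_iff_eq hden]
    have hexp : Real.exp (y ^ 2) * Real.exp (-y ^ 2) = 1 := by
      rw [← Real.exp_add]; simp
    rw [hKdef]
    linear_combination (2 * Real.sqrt Real.pi * y * α) * hexp
end
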